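/- arXiv:1905.00461 — 2 statements merged into one kernel-verified Lean document; each statement's English description precedes it below -/
import Mathlib

section
/- For every natural number n ≥ 1, the following two-sided bound holds: √(πn)/(2^n · n!) · e^{2/(12n+1) − 1/(24n)} ≤ (2^n · n!)/(2n)! ≤ √(πn)/(2^n · n!) · e^{1/(6n) − 1/(24n+1)}. -/
open Real

section StirlingAux
open Stirling Filter Nat Topology

lemma step_lower (m : ℕ) :
    1 / (12 * ((m : ℝ) + 1) + 1) - 1 / (12 * ((m : ℝ) + 2) + 1)
      ≤ Real.log (stirlingSeq (m + 1)) - Real.log (stirlingSeq (m + 2)) := by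
  have h := log_stirlingSeq_diff_hasSum m
  have h0 := le_hasSum h 0 (fun j _ => by positivity)
  push_cast at h0
  norm_num at h0
  refine le_trans ?_ h0
  have he : (1/3 : ℝ) * (((2:ℝ) * ((m:ℝ) + 1) + 1) ^ 2)⁻¹ = 1 / (3 * (2 * (m:ℝ) + 3) ^ 2) := by
    rw [eq_div_iff (by positivity)]
    field_simp
    ring
  rw [he, div_sub_div _ _ (by positivity) (by positivity),
    div_le_div_iff₀ (by positivity) (by positivity)]
  nlinarith [Nat.cast_nonneg (α := ℝ) m]

lemma step_upper (m : ℕ) :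
    Real.log (stirlingSeq (m + 1)) - Real.log (stirlingSeq (m + 2))
      ≤ 1 / (12 * ((m : ℝ) + 1)) - 1 / (12 * ((m : ℝ) + 2)) := by
  set x : ℝ := (1 / (2 * ((m : ℝ) + 1) + 1)) ^ 2 with hx
  have hx0 : (0:ℝ) ≤ x := by positivity
  have hx1 : x < 1 := by
    rw [hx, div_pow, one_pow, div_lt_one (by positivity)]
    nlinarith [Nat.cast_nonneg (α := ℝ) m]
  have g := (hasSum_geometric_of_lt_one hx0 hx1).mul_left (x / 3)
  have hle := hasSum_le
      (f := fun k : ℕ => (1 : ℝ) / (2 * ↑(k + 1) + 1) * ((1 / (2 * ↑(m + 1) + 1)) ^ 2) ^ (k + 1))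
      (g := fun k : ℕ => x / 3 * x ^ k) ?_ (log_stirlingSeq_diff_hasSum m) g
  · refine hle.trans (le_of_eq ?_)
    have h2 : ((2 * ((m : ℝ) + 1) + 1) ^ 2 - 1) ≠ 0 := by nlinarith [Nat.cast_nonneg (α := ℝ) m]
    rw [hx, div_pow, one_pow]
    have h1 : (1:ℝ) - 1 / (2 * ((m : ℝ) + 1) + 1) ^ 2
        = ((2 * ((m : ℝ) + 1) + 1) ^ 2 - 1) / (2 * ((m : ℝ) + 1) + 1) ^ 2 := by field_simp
    rw [h1]
    field_simp
    ring
  · intro k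
    show (1:ℝ) / (2 * (↑(k + 1) : ℝ) + 1) * ((1 / (2 * (↑(m + 1) : ℝ) + 1)) ^ 2) ^ (k + 1)
        ≤ x / 3 * x ^ k
    have hcast : ((1:ℝ) / (2 * (↑(m + 1) : ℝ) + 1)) ^ 2 = x := by rw [hx]; push_cast; ring_nf
    rw [hcast, pow_succ, ← mul_assoc]
    have h3 : (1:ℝ) / (2 * (↑(k + 1) : ℝ) + 1) ≤ 1 / 3 := by
      apply div_le_div_of_nonneg_left (by norm_num) (by norm_num)
      push_cast; linarith [Nat.cast_nonneg (α := ℝ) k]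
    calc (1:ℝ) / (2 * (↑(k + 1) : ℝ) + 1) * x ^ k * x ≤ 1 / 3 * x ^ k * x := by
          apply mul_le_mul_of_nonneg_right (mul_le_mul_of_nonneg_right h3 (by positivity)) hx0
      _ = x / 3 * x ^ k := by ring

lemma log_s_tendsto :
    Tendsto (fun n : ℕ => Real.log (stirlingSeq n)) atTop (𝓝 (Real.log (Real.sqrt π))) :=
  ((Real.continuousAt_log (by positivity)).tendsto).comp tendsto_stirlingSeq_sqrt_pi

lemma inv_lin_tendsto (c : ℝ) (hc : 0 < c) :
    Tendsto (fun n : ℕ => 1 / (c * (n : ℝ))) atTop (𝓝 0) := by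
  simp only [one_div]
  exact (tendsto_natCast_atTop_atTop.const_mul_atTop hc).inv_tendsto_atTop

lemma robbins_upper (n : ℕ) (hn : 1 ≤ n) :
    stirlingSeq n ≤ Real.sqrt π * Real.exp (1 / (12 * (n : ℝ))) := by
  have hs : 0 < stirlingSeq n := by
    obtain ⟨m, rfl⟩ := Nat.exists_eq_add_of_le hn
    rw [Nat.add_comm]; exact stirlingSeq'_pos m
  have key : ∀ m, n ≤ m →
      Real.log (stirlingSeq n) - 1 / (12 * (n : ℝ)) ≤
        Real.log (stirlingSeq m) - 1 / (12 * (m : ℝ)) := by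
    intro m hm
    induction m, hm using Nat.le_induction with
    | base => exact le_rfl
    | succ m hm ih =>
      refine ih.trans ?_
      obtain ⟨k, rfl⟩ := Nat.exists_eq_add_of_le' (hn.trans hm)
      have h := step_upper k
      have h12 : stirlingSeq (k + 1 + 1) = stirlingSeq (k + 2) := by norm_num
      rw [h12]
      push_cast
      ring_nf at h ⊢
      linarith
  have hT : Tendsto (fun m : ℕ => Real.log (stirlingSeq m) - 1 / (12 * (m : ℝ))) atTop
      (𝓝 (Real.log (Real.sqrt π) - 0)) := log_s_tendsto.sub (inv_lin_tendsto 12 (by norm_num))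
  have hb := ge_of_tendsto hT (eventually_atTop.2 ⟨n, fun m hm => key m hm⟩)
  rw [sub_zero] at hb
  have : Real.log (stirlingSeq n) ≤ Real.log (Real.sqrt π * Real.exp (1 / (12 * (n : ℝ)))) := by
    rw [Real.log_mul (by positivity) (Real.exp_ne_zero _), Real.log_exp]
    linarith
  calc stirlingSeq n = Real.exp (Real.log (stirlingSeq n)) := (Real.exp_log hs).symm
    _ ≤ Real.exp (Real.log (Real.sqrt π * Real.exp (1 / (12 * (n:ℝ))))) := Real.exp_le_exp.2 this
    _ = _ := Real.exp_log (by positivity)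

lemma robbins_lower (n : ℕ) (hn : 1 ≤ n) :
    Real.sqrt π * Real.exp (1 / (12 * (n : ℝ) + 1)) ≤ stirlingSeq n := by
  have hs : 0 < stirlingSeq n := by
    obtain ⟨m, rfl⟩ := Nat.exists_eq_add_of_le hn
    rw [Nat.add_comm]; exact stirlingSeq'_pos m
  have key : ∀ m, n ≤ m →
      Real.log (stirlingSeq m) - 1 / (12 * (m : ℝ) + 1) ≤
        Real.log (stirlingSeq n) - 1 / (12 * (n : ℝ) + 1) := by
    intro m hm
    induction m, hm using Nat.le_induction with
    | base => exact le_rfl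
    | succ m hm ih =>
      refine le_trans ?_ ih
      obtain ⟨k, rfl⟩ := Nat.exists_eq_add_of_le' (hn.trans hm)
      have h := step_lower k
      have h12 : stirlingSeq (k + 1 + 1) = stirlingSeq (k + 2) := by norm_num
      rw [h12]
      push_cast
      ring_nf at h ⊢
      linarith
  have hT : Tendsto (fun m : ℕ => Real.log (stirlingSeq m) - 1 / (12 * (m : ℝ) + 1)) atTop
      (𝓝 (Real.log (Real.sqrt π) - 0)) := by
    refine log_s_tendsto.sub ?_
    simp only [one_div]
    exact ((tendsto_natCast_atTop_atTop.const_mul_atTop (by norm_num : (0:ℝ) < 12)).atTop_add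
      tendsto_const_nhds).inv_tendsto_atTop
  have hb := le_of_tendsto hT (eventually_atTop.2 ⟨n, fun m hm => key m hm⟩)
  rw [sub_zero] at hb
  have hlog : Real.log (Real.sqrt π * Real.exp (1 / (12 * (n : ℝ) + 1)))
      ≤ Real.log (stirlingSeq n) := by
    rw [Real.log_mul (by positivity) (Real.exp_ne_zero _), Real.log_exp]
    linarith
  calc Real.sqrt π * Real.exp (1 / (12 * (n:ℝ) + 1))
      = Real.exp (Real.log (Real.sqrt π * Real.exp (1 / (12 * (n:ℝ) + 1)))) :=
        (Real.exp_log (by positivity)).symm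
    _ ≤ Real.exp (Real.log (stirlingSeq n)) := Real.exp_le_exp.2 hlog
    _ = stirlingSeq n := Real.exp_log hs

lemma fact_eq (m : ℕ) : (m ! : ℝ) = stirlingSeq m * (Real.sqrt (2 * m) * ((m : ℝ) / exp 1) ^ m)
    ∨ m = 0 := by
  rcases Nat.eq_zero_or_pos m with h | h
  · right; exact h
  · left
    rw [stirlingSeq, div_mul_cancel₀]
    have : (0:ℝ) < (m:ℝ) := by exact_mod_cast h
    positivity

lemma sqrt_pi_exp_sq_div (a b : ℝ) :
    (Real.sqrt π * Real.exp a) ^ 2 / (Real.sqrt π * Real.exp b)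
      = Real.sqrt π * Real.exp (2 * a - b) := by
  have hππ : Real.sqrt π * Real.sqrt π = π := Real.mul_self_sqrt pi_pos.le
  have hπ : Real.sqrt π ≠ 0 := by positivity
  rw [show 2 * a - b = a + a - b by ring, Real.exp_sub, Real.exp_add]
  field_simp [Real.exp_ne_zero]

theorem stirling_ratio_bounds (n : ℕ) (hn : 1 ≤ n) :
    Real.sqrt (π * n) / (2 ^ n * n.factorial) * Real.exp (2 / (12 * n + 1) - 1 / (24 * n))
      ≤ (2 ^ n * n.factorial : ℝ) / (2 * n).factorial ∧
    (2 ^ n * n.factorial : ℝ) / (2 * n).factorial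
      ≤ Real.sqrt (π * n) / (2 ^ n * n.factorial) * Real.exp (1 / (6 * n) - 1 / (24 * n + 1)) := by
  have hn0 : (0:ℝ) < (n:ℝ) := by exact_mod_cast hn
  set A : ℝ := 2 ^ n * n.factorial with hA
  set B : ℝ := ((2 * n).factorial : ℝ) with hB
  set sn := stirlingSeq n with hsn
  set s2 := stirlingSeq (2 * n) with hs2
  have hApos : 0 < A := by positivity
  have hBpos : 0 < B := by rw [hB]; exact_mod_cast (2 * n).factorial_pos
  have hsnpos : 0 < sn := by
    obtain ⟨m, rfl⟩ := Nat.exists_eq_add_of_le' hn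
    exact stirlingSeq'_pos m
  have hs2pos : 0 < s2 := by
    have h2n : 1 ≤ 2 * n := by omega
    obtain ⟨m, hm⟩ := Nat.exists_eq_add_of_le' h2n
    rw [hs2, hm]; exact stirlingSeq'_pos m
  -- factorial formulas
  have hf1 := (fact_eq n).resolve_right (by omega)
  have hf2 := (fact_eq (2 * n)).resolve_right (by omega)
  -- key identity
  have hsq2 : Real.sqrt (2 * (n:ℝ)) * Real.sqrt (2 * (n:ℝ)) = 2 * (n:ℝ) :=
    Real.mul_self_sqrt (by positivity)
  have hsq4 : Real.sqrt (2 * (2 * (n:ℝ))) = 2 * Real.sqrt n := by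
    rw [show (2 : ℝ) * (2 * (n:ℝ)) = 4 * (n:ℝ) by ring, show (4:ℝ) = 2 ^ 2 by norm_num,
      Real.sqrt_mul (by positivity), Real.sqrt_sq (by norm_num)]
  have hsqn : Real.sqrt (n:ℝ) * Real.sqrt (n:ℝ) = (n:ℝ) := Real.mul_self_sqrt hn0.le
  have hpow : ((2 * (n:ℝ)) / exp 1) ^ (2 * n) = ((2:ℝ) ^ n) ^ 2 * (((n:ℝ) / exp 1) ^ n) ^ 2 := by
    rw [show (2 * (n:ℝ)) / exp 1 = 2 * ((n:ℝ) / exp 1) by ring, mul_pow, pow_mul', pow_mul']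
  have hAB : A ^ 2 * s2 = sn ^ 2 * Real.sqrt n * B := by
    rw [hA, hB, hf1, hf2]
    push_cast
    rw [hpow, hsq4]
    linear_combination ((2:ℝ) ^ n * sn * (((n:ℝ)) / exp 1) ^ n) ^ 2 * s2 * hsq2
      - 2 * ((2:ℝ) ^ n * sn * (((n:ℝ)) / exp 1) ^ n) ^ 2 * s2 * hsqn
  -- ratio identity
  have hratio : A / B = sn ^ 2 / s2 * (Real.sqrt n / A) := by
    field_simp
    linear_combination hAB
  have hsplit : Real.sqrt (π * n) = Real.sqrt π * Real.sqrt n := Real.sqrt_mul pi_pos.le n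
  have hu1 : sn ≤ Real.sqrt π * Real.exp (1 / (12 * (n:ℝ))) := robbins_upper n hn
  have hl1 : Real.sqrt π * Real.exp (1 / (12 * (n:ℝ) + 1)) ≤ sn := robbins_lower n hn
  have hu2 : s2 ≤ Real.sqrt π * Real.exp (1 / (24 * (n:ℝ))) := by
    have h := robbins_upper (2 * n) (by omega)
    push_cast at h
    rw [show (12:ℝ) * (2 * (n:ℝ)) = 24 * (n:ℝ) by ring] at h
    exact h
  have hl2 : Real.sqrt π * Real.exp (1 / (24 * (n:ℝ) + 1)) ≤ s2 := by
    have h := robbins_lower (2 * n) (by omega)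
    push_cast at h
    rw [show (12:ℝ) * (2 * (n:ℝ)) = 24 * (n:ℝ) by ring] at h
    exact h
  have hposn : (0:ℝ) ≤ Real.sqrt n / A := by positivity
  constructor
  · -- lower bound
    have hdiv : (Real.sqrt π * Real.exp (1 / (12 * (n:ℝ) + 1))) ^ 2
        / (Real.sqrt π * Real.exp (1 / (24 * (n:ℝ)))) ≤ sn ^ 2 / s2 := by
      apply div_le_div₀ (by positivity) (pow_le_pow_left₀ (by positivity) hl1 2) hs2pos hu2
    rw [sqrt_pi_exp_sq_div] at hdiv
    have hexp : 2 * (1 / (12 * (n:ℝ) + 1)) - 1 / (24 * (n:ℝ))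
        = 2 / (12 * (n:ℝ) + 1) - 1 / (24 * (n:ℝ)) := by rw [mul_one_div]
    rw [hexp] at hdiv
    calc Real.sqrt (π * n) / A * Real.exp (2 / (12 * (n:ℝ) + 1) - 1 / (24 * (n:ℝ)))
        = Real.sqrt π * Real.exp (2 / (12 * (n:ℝ) + 1) - 1 / (24 * (n:ℝ)))
            * (Real.sqrt n / A) := by rw [hsplit]; ring
      _ ≤ sn ^ 2 / s2 * (Real.sqrt n / A) := mul_le_mul_of_nonneg_right hdiv hposn
      _ = A / B := hratio.symm
  · -- upper bound
    have hdiv : sn ^ 2 / s2 ≤ (Real.sqrt π * Real.exp (1 / (12 * (n:ℝ)))) ^ 2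
        / (Real.sqrt π * Real.exp (1 / (24 * (n:ℝ) + 1))) := by
      apply div_le_div₀ (by positivity) (pow_le_pow_left₀ hsnpos.le hu1 2) (by positivity) hl2
    rw [sqrt_pi_exp_sq_div] at hdiv
    have hexp : 2 * (1 / (12 * (n:ℝ))) - 1 / (24 * (n:ℝ) + 1)
        = 1 / (6 * (n:ℝ)) - 1 / (24 * (n:ℝ) + 1) := by
      rw [mul_one_div]
      congr 1
      rw [div_eq_div_iff (by positivity) (by positivity)]
      ring
    rw [hexp] at hdiv
    calc A / B = sn ^ 2 / s2 * (Real.sqrt n / A) := hratio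
      _ ≤ Real.sqrt π * Real.exp (1 / (6 * (n:ℝ)) - 1 / (24 * (n:ℝ) + 1))
            * (Real.sqrt n / A) := mul_le_mul_of_nonneg_right hdiv hposn
      _ = Real.sqrt (π * n) / A * Real.exp (1 / (6 * (n:ℝ)) - 1 / (24 * (n:ℝ) + 1)) := by
          rw [hsplit]; ring

end StirlingAux
end

section
/- For every natural number n ≥ 1, 2^n·n!/(2n)! ≤ √(πn)/(2^n·n!)·e^{1/(6n)} and 2^n·n!/(2n)! = (√(πn)/(2^n·n!))·(1 + O(1/n)) as n → ∞. -/
open Real Filter Asymptotics Topology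

noncomputable def cbFseq (n : ℕ) : ℝ :=
  4 ^ n * (n.factorial : ℝ) ^ 2 / ((2 * n).factorial * Real.sqrt (π * n))

lemma cbFseq_pos {n : ℕ} (hn : 1 ≤ n) : 0 < cbFseq n := by
  have hn' : (0:ℝ) < n := by exact_mod_cast hn
  have hf : (0:ℝ) < (n.factorial : ℝ) := by exact_mod_cast n.factorial_pos
  have hg : (0:ℝ) < ((2*n).factorial : ℝ) := by exact_mod_cast (2*n).factorial_pos
  have hs : (0:ℝ) < Real.sqrt (π * n) := Real.sqrt_pos.2 (by positivity)
  unfold cbFseq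
  positivity

lemma cbFseq_step {n : ℕ} (hn : 1 ≤ n) :
    cbFseq (n+1) * ((2*(n:ℝ)+1) * Real.sqrt (π*((n:ℝ)+1)))
      = cbFseq n * ((2*(n:ℝ)+2) * Real.sqrt (π*(n:ℝ))) := by
  have hn' : (0:ℝ) < n := by exact_mod_cast hn
  have hfac : (2*(n+1)).factorial = (2*n+2) * ((2*n+1) * (2*n).factorial) := by
    have : 2*(n+1) = (2*n+1)+1 := by ring
    rw [this, Nat.factorial_succ, Nat.factorial_succ]
  have hg : ((2*n).factorial : ℝ) ≠ 0 := by
    exact_mod_cast (2*n).factorial_pos.ne'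
  have hs1 : Real.sqrt (π*(n:ℝ)) ≠ 0 := (Real.sqrt_pos.2 (by positivity)).ne'
  have hs2 : Real.sqrt (π*((n:ℝ)+1)) ≠ 0 := (Real.sqrt_pos.2 (by positivity)).ne'
  unfold cbFseq
  rw [hfac, Nat.factorial_succ]
  push_cast
  field_simp
  ring

lemma sq_le_imp {a b : ℝ} (hb : 0 ≤ b) (h : a ^ 2 ≤ b ^ 2) : a ≤ b :=
  le_of_pow_le_pow_left₀ two_ne_zero hb h

lemma cbFseq_succ_le {n : ℕ} (hn : 1 ≤ n) : cbFseq (n+1) ≤ cbFseq n := by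
  have hn' : (1:ℝ) ≤ n := by exact_mod_cast hn
  have hA : (0:ℝ) < (2*(n:ℝ)+1) * Real.sqrt (π*((n:ℝ)+1)) := by
    have : (0:ℝ) < Real.sqrt (π*((n:ℝ)+1)) := Real.sqrt_pos.2 (by positivity)
    positivity
  have key : (2*(n:ℝ)+2) * Real.sqrt (π*(n:ℝ)) ≤ (2*(n:ℝ)+1) * Real.sqrt (π*((n:ℝ)+1)) := by
    apply sq_le_imp hA.le
    rw [mul_pow, mul_pow, Real.sq_sqrt (by positivity), Real.sq_sqrt (by positivity)]
    nlinarith [Real.pi_pos, mul_pos Real.pi_pos (show (0:ℝ) < (n:ℝ)+1 by positivity)]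
  have hpos := cbFseq_pos hn
  have hstep := cbFseq_step hn
  have h2 : cbFseq (n+1) * ((2*(n:ℝ)+1) * Real.sqrt (π*((n:ℝ)+1)))
      ≤ cbFseq n * ((2*(n:ℝ)+1) * Real.sqrt (π*((n:ℝ)+1))) := by
    rw [hstep]
    exact mul_le_mul_of_nonneg_left key hpos.le
  exact le_of_mul_le_mul_right h2 hA

lemma cbFseq_exp_mono {n : ℕ} (hn : 1 ≤ n) :
    cbFseq n * Real.exp (-(1/(6*(n:ℝ)))) ≤ cbFseq (n+1) * Real.exp (-(1/(6*((n:ℝ)+1)))) := by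
  have hn' : (1:ℝ) ≤ n := by exact_mod_cast hn
  have hnpos : (0:ℝ) < n := by linarith
  obtain ⟨x, hx⟩ : ∃ x : ℝ, x = 1/(6*(n:ℝ)) - 1/(6*((n:ℝ)+1)) := ⟨_, rfl⟩
  have hx2 : 2 * x = 1/(3*(n:ℝ)*((n:ℝ)+1)) := by
    rw [hx]; field_simp; ring
  have heq : (2*(n:ℝ)+2)^2*(π*(n:ℝ))*(1+2*x)
      = (2*(n:ℝ)+1)^2*(π*((n:ℝ)+1)) + π*(((n:ℝ)+1)/3) := by
    rw [hx2]; field_simp; ring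
  have hexp : 1 + 2*x ≤ Real.exp (2*x) := by linarith [Real.add_one_le_exp (2*x)]
  have hB : (0:ℝ) < (2*(n:ℝ)+2) * Real.sqrt (π*(n:ℝ)) := by
    have : (0:ℝ) < Real.sqrt (π*(n:ℝ)) := Real.sqrt_pos.2 (by positivity)
    positivity
  have key : (2*(n:ℝ)+1) * Real.sqrt (π*((n:ℝ)+1))
      ≤ (2*(n:ℝ)+2) * Real.sqrt (π*(n:ℝ)) * Real.exp x := by
    apply sq_le_imp (by positivity)
    have hex2 : (Real.exp x)^2 = Real.exp (2*x) := by
      rw [← Real.exp_nat_mul]; norm_num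
    rw [mul_pow, mul_pow, mul_pow, Real.sq_sqrt (by positivity),
      Real.sq_sqrt (by positivity), hex2]
    have h1 : (2*(n:ℝ)+2)^2*(π*(n:ℝ))*(1+2*x)
        ≤ (2*(n:ℝ)+2)^2*(π*(n:ℝ))*Real.exp (2*x) :=
      mul_le_mul_of_nonneg_left hexp (by positivity)
    have h2 : (0:ℝ) < π*(((n:ℝ)+1)/3) := by positivity
    linarith [h1, h2, heq]
  have hstep := cbFseq_step hn
  have hpos1 := cbFseq_pos (show 1 ≤ n+1 by omega)
  have h3 : cbFseq n * ((2*(n:ℝ)+2) * Real.sqrt (π*(n:ℝ)))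
      ≤ cbFseq (n+1) * Real.exp x * ((2*(n:ℝ)+2) * Real.sqrt (π*(n:ℝ))) := by
    rw [← hstep]
    calc cbFseq (n+1) * ((2*(n:ℝ)+1) * Real.sqrt (π*((n:ℝ)+1)))
        ≤ cbFseq (n+1) * ((2*(n:ℝ)+2) * Real.sqrt (π*(n:ℝ)) * Real.exp x) :=
          mul_le_mul_of_nonneg_left key hpos1.le
      _ = cbFseq (n+1) * Real.exp x * ((2*(n:ℝ)+2) * Real.sqrt (π*(n:ℝ))) := by ring
  have h4 : cbFseq n ≤ cbFseq (n+1) * Real.exp x := le_of_mul_le_mul_right h3 hB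
  have h5 : cbFseq n * Real.exp (-(1/(6*(n:ℝ))))
      ≤ cbFseq (n+1) * Real.exp x * Real.exp (-(1/(6*(n:ℝ)))) :=
    mul_le_mul_of_nonneg_right h4 (Real.exp_pos _).le
  refine h5.trans_eq ?_
  rw [mul_assoc, ← Real.exp_add, hx,
    show 1/(6*(n:ℝ)) - 1/(6*((n:ℝ)+1)) + -(1/(6*(n:ℝ))) = -(1/(6*((n:ℝ)+1))) by ring]

lemma cbFseq_anti : ∀ {k l : ℕ}, 1 ≤ k → k ≤ l → cbFseq l ≤ cbFseq k := by
  intro k l hk hkl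
  induction l, hkl using Nat.le_induction with
  | base => exact le_rfl
  | succ n hn ih => exact (cbFseq_succ_le (hk.trans hn)).trans ih

lemma cbFseq_eq_stirling {n : ℕ} (hn : 1 ≤ n) :
    cbFseq n = Stirling.stirlingSeq n ^ 2 / (Stirling.stirlingSeq (2*n) * Real.sqrt π) := by
  have hn' : (0:ℝ) < n := by exact_mod_cast hn
  have hg : ((2*n).factorial : ℝ) ≠ 0 := by exact_mod_cast (2*n).factorial_pos.ne'
  have hsn : (0:ℝ) < Real.sqrt (n:ℝ) := Real.sqrt_pos.2 hn'
  have hsp : (0:ℝ) < Real.sqrt π := Real.sqrt_pos.2 Real.pi_pos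
  have hc : (0:ℝ) < ((n:ℝ)/Real.exp 1)^n := by positivity
  have hs2 : Real.sqrt (n:ℝ) ^ 2 = (n:ℝ) := Real.sq_sqrt hn'.le
  have e1 : Stirling.stirlingSeq n ^ 2
      = (n.factorial : ℝ)^2 / ((2 * Real.sqrt (n:ℝ)^2) * (((n:ℝ)/Real.exp 1)^n)^2) := by
    rw [Stirling.stirlingSeq, div_pow, mul_pow, Real.sq_sqrt (by positivity), hs2]
  have e2 : Stirling.stirlingSeq (2*n)
      = ((2*n).factorial : ℝ) / ((2 * Real.sqrt (n:ℝ)) * (4^n * (((n:ℝ)/Real.exp 1)^n)^2)) := by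
    rw [Stirling.stirlingSeq]
    congr 1
    push_cast
    rw [show 2*(2*(n:ℝ)) = 2^2 * n by ring, Real.sqrt_mul (by positivity),
      Real.sqrt_sq (by norm_num : (0:ℝ) ≤ 2)]
    congr 1
    rw [show (2*(n:ℝ))/Real.exp 1 = 2*((n:ℝ)/Real.exp 1) by ring, mul_pow]
    rw [show (4:ℝ)^n = 2^(2*n) by rw [pow_mul]; norm_num,
      show (((n:ℝ)/Real.exp 1)^n)^2 = ((n:ℝ)/Real.exp 1)^(2*n) by rw [← pow_mul, mul_comm]]
  have e3 : Real.sqrt (π * n) = Real.sqrt π * Real.sqrt n :=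
    Real.sqrt_mul Real.pi_pos.le _
  rw [e1, e2]
  unfold cbFseq
  rw [e3]
  rw [show (n:ℝ) = Real.sqrt (n:ℝ)^2 from hs2.symm]
  field_simp

lemma cbFseq_tendsto : Tendsto cbFseq atTop (𝓝 1) := by
  have h2 : Tendsto (fun n : ℕ => 2*n) atTop atTop :=
    tendsto_atTop_atTop.2 (fun b => ⟨b, fun a ha => by omega⟩)
  have hs2 : Tendsto (fun n : ℕ => Stirling.stirlingSeq (2*n)) atTop (𝓝 (Real.sqrt π)) :=
    Stirling.tendsto_stirlingSeq_sqrt_pi.comp h2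
  have hne : Real.sqrt π * Real.sqrt π ≠ 0 := by
    rw [Real.mul_self_sqrt Real.pi_pos.le]; exact Real.pi_ne_zero
  have h := ((Stirling.tendsto_stirlingSeq_sqrt_pi.pow 2).div
    (hs2.mul tendsto_const_nhds) hne)
  have hval : Real.sqrt π ^ 2 / (Real.sqrt π * Real.sqrt π) = 1 := by
    rw [Real.sq_sqrt Real.pi_pos.le, Real.mul_self_sqrt Real.pi_pos.le]
    exact div_self Real.pi_ne_zero
  rw [hval] at h
  apply h.congr'
  filter_upwards [eventually_ge_atTop 1] with n hn
  exact (cbFseq_eq_stirling hn).symm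

lemma one_le_cbFseq {n : ℕ} (hn : 1 ≤ n) : 1 ≤ cbFseq n :=
  le_of_tendsto cbFseq_tendsto (eventually_atTop.2 ⟨n, fun _ hm => cbFseq_anti hn hm⟩)

lemma gseq_tendsto :
    Tendsto (fun n : ℕ => cbFseq n * Real.exp (-(1/(6*(n:ℝ))))) atTop (𝓝 1) := by
  have h1 : Tendsto (fun n : ℕ => 1/(6*(n:ℝ))) atTop (𝓝 0) := by
    have := tendsto_one_div_atTop_nhds_zero_nat.const_mul (1/6 : ℝ)
    rw [mul_zero] at this
    apply this.congr
    intro n; field_simp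
  have h2 : Tendsto (fun n : ℕ => Real.exp (-(1/(6*(n:ℝ))))) atTop (𝓝 1) := by
    have := (Real.continuous_exp.tendsto (-(0:ℝ))).comp h1.neg
    simpa [Function.comp_def] using this
  simpa using cbFseq_tendsto.mul h2

lemma cbFseq_le_exp {n : ℕ} (hn : 1 ≤ n) : cbFseq n ≤ Real.exp (1/(6*(n:ℝ))) := by
  have hmono : ∀ m, n ≤ m → cbFseq n * Real.exp (-(1/(6*(n:ℝ))))
      ≤ cbFseq m * Real.exp (-(1/(6*(m:ℝ)))) := by
    intro m hm
    induction m, hm using Nat.le_induction with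
    | base => exact le_rfl
    | succ k hk ih =>
        refine ih.trans ?_
        have := cbFseq_exp_mono (hn.trans hk)
        push_cast
        convert this using 3 <;> push_cast <;> ring
  have hle : cbFseq n * Real.exp (-(1/(6*(n:ℝ)))) ≤ 1 :=
    ge_of_tendsto gseq_tendsto (eventually_atTop.2 ⟨n, hmono⟩)
  have := mul_le_mul_of_nonneg_right hle (Real.exp_pos (1/(6*(n:ℝ)))).le
  rwa [mul_assoc, ← Real.exp_add, neg_add_cancel, Real.exp_zero, mul_one, one_mul] at this

theorem central_binom_ratio :
    (∀ m : ℕ, 1 ≤ m →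
        (2 ^ m * m.factorial : ℝ) / (2 * m).factorial
          ≤ Real.sqrt (π * m) / (2 ^ m * m.factorial) * Real.exp (1 / (6 * m))) ∧
    (fun m : ℕ => (2 ^ m * m.factorial : ℝ) / (2 * m).factorial
        / (Real.sqrt (π * m) / (2 ^ m * m.factorial)) - 1)
      =O[atTop] fun m : ℕ => 1 / (m : ℝ) := by
  have hratio : ∀ m : ℕ, 1 ≤ m →
      (2 ^ m * m.factorial : ℝ) / (2 * m).factorial
        / (Real.sqrt (π * m) / (2 ^ m * m.factorial)) = cbFseq m := by
    intro m hm
    have hm' : (0:ℝ) < m := by exact_mod_cast hm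
    have hf : (0:ℝ) < (m.factorial : ℝ) := by exact_mod_cast m.factorial_pos
    have hg : (0:ℝ) < ((2*m).factorial : ℝ) := by exact_mod_cast (2*m).factorial_pos
    have hs : (0:ℝ) < Real.sqrt (π * m) := Real.sqrt_pos.2 (by positivity)
    unfold cbFseq
    rw [show (4:ℝ)^m = (2^m)^2 by rw [show (4:ℝ)=2^2 by norm_num, ← pow_mul, mul_comm 2 m, pow_mul]]
    field_simp
  constructor
  · intro m hm
    have hm' : (0:ℝ) < m := by exact_mod_cast hm
    have hf : (0:ℝ) < (m.factorial : ℝ) := by exact_mod_cast m.factorial_pos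
    have hg : (0:ℝ) < ((2*m).factorial : ℝ) := by exact_mod_cast (2*m).factorial_pos
    have hs : (0:ℝ) < Real.sqrt (π * m) := Real.sqrt_pos.2 (by positivity)
    have h1 := cbFseq_le_exp hm
    have h2 : (2 ^ m * m.factorial : ℝ) / (2 * m).factorial
        = cbFseq m * (Real.sqrt (π * m) / (2 ^ m * m.factorial)) := by
      unfold cbFseq
      rw [show (4:ℝ)^m = (2^m)^2 by rw [show (4:ℝ)=2^2 by norm_num, ← pow_mul, mul_comm 2 m, pow_mul]]
      field_simp
    rw [h2]
    have h3 : (0:ℝ) ≤ Real.sqrt (π * m) / (2 ^ m * m.factorial) := by positivity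
    calc cbFseq m * (Real.sqrt (π * m) / (2 ^ m * m.factorial))
        ≤ Real.exp (1/(6*(m:ℝ))) * (Real.sqrt (π * m) / (2 ^ m * m.factorial)) :=
          mul_le_mul_of_nonneg_right h1 h3
      _ = Real.sqrt (π * m) / (2 ^ m * m.factorial) * Real.exp (1 / (6 * m)) := by ring
  · rw [isBigO_iff]
    refine ⟨1, ?_⟩
    filter_upwards [eventually_ge_atTop 1] with m hm
    have hm' : (1:ℝ) ≤ m := by exact_mod_cast hm
    have hmpos : (0:ℝ) < m := by linarith
    rw [hratio m hm]
    have hlow : 1 ≤ cbFseq m := one_le_cbFseq hm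
    have hup : cbFseq m ≤ Real.exp (1/(6*(m:ℝ))) := cbFseq_le_exp hm
    have hx : (0:ℝ) ≤ 1/(6*(m:ℝ)) := by positivity
    set x : ℝ := 1/(6*(m:ℝ)) with hxdef
    clear_value x
    have hexp1 : Real.exp x - 1 ≤ x * Real.exp x := by
      have hmul : Real.exp x * Real.exp (-x) = 1 := by
        rw [← Real.exp_add]; simp
      nlinarith [mul_le_mul_of_nonneg_left (Real.add_one_le_exp (-x)) (Real.exp_pos x).le, hmul]
    have hxle : x ≤ 1/6 := by
      rw [hxdef]
      rw [div_le_div_iff₀ (by positivity) (by norm_num)]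
      linarith
    have hexp2 : Real.exp x ≤ 3 := by
      calc Real.exp x ≤ Real.exp 1 := Real.exp_le_exp.2 (by linarith)
        _ ≤ 3 := by linarith [Real.exp_one_lt_d9]
    have hfinal : cbFseq m - 1 ≤ 1/(m:ℝ) := by
      have hstep2 : x * Real.exp x ≤ x * 3 := mul_le_mul_of_nonneg_left hexp2 hx
      have h6 : x * 3 ≤ 1/(m:ℝ) := by
        rw [hxdef, div_mul_eq_mul_div, div_le_div_iff₀ (by positivity) hmpos]
        linarith
      linarith [hstep2]
    rw [Real.norm_eq_abs, Real.norm_eq_abs, abs_of_nonneg (by linarith : (0:ℝ) ≤ cbFseq m - 1),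
      abs_of_nonneg (by positivity : (0:ℝ) ≤ 1/(m:ℝ)), one_mul]
    exact hfinal
end
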